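/- For every index k ≥ 1, the game G_S^k of the SCC family is a core extension of the core game G_C^k; hence the SCC family {G_S^k}_{k≥1} is a worst-case family. -/

import Mathlib

/-!
Formalization framework for parity games, the McNaughton-Zielonka Recursive
algorithm, the core family, core extensions, worst-case families, the induced
subgame tree, and the SCC family.
-/

universe u

/-- A parity game (as a plain structure): positions of player 0, positions of
player 1, a move relation and a priority function. -/
structure PGame (V : Type u) where
  Ps0 : Set V
  Ps1 : Set V
  Mv : V → V → Prop
  Pr : V → ℕ

namespace PGame

variable {V : Type u}

/-- The set of positions of a game. -/
def Ps (G : PGame V) : Set V := G.Ps0 ∪ G.Ps1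

/-- The positions owned by player `p` (players are identified with their parity). -/
def owner (G : PGame V) (p : ℕ) : Set V := if p % 2 = 0 then G.Ps0 else G.Ps1

/-- Well-formedness: disjoint finite position sets and a left-total move
relation contained in `Ps × Ps`. -/
def IsParityGame (G : PGame V) : Prop :=
  Disjoint G.Ps0 G.Ps1 ∧ G.Ps.Finite ∧
    (∀ v ∈ G.Ps, ∃ u ∈ G.Ps, G.Mv v u) ∧
    (∀ v u, G.Mv v u → v ∈ G.Ps ∧ u ∈ G.Ps)

/-- The `p`-predecessor operator:  positions from which player `p` can force
the game into `U` in one move. -/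
def pre (G : PGame V) (p : ℕ) (U : Set V) : Set V :=
  {v | v ∈ G.owner p ∧ ∃ u ∈ U, G.Mv v u} ∪
    {v | v ∈ G.owner (p + 1) ∧ ∀ u, G.Mv v u → u ∈ U}

/-- The monotone operator whose least fixpoint is the `p`-attractor of `T`. -/
def attrF (G : PGame V) (p : ℕ) (T : Set V) : Set V →o Set V :=
  ⟨fun A => T ∪ G.pre p A, by
    intro A B hAB v hv
    rcases hv with hv | hv
    · exact Or.inl hv
    · rcases hv with hv | hv
      · exact Or.inr (Or.inl ⟨hv.1, hv.2.imp fun u hu => ⟨hAB hu.1, hu.2⟩⟩)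
      · exact Or.inr (Or.inr ⟨hv.1, fun u hu => hAB (hv.2 u hu)⟩)⟩

/-- The `p`-attractor of `T` in `G`: the least fixpoint of the predecessor
operator extended with `T`. -/
def attr (G : PGame V) (p : ℕ) (T : Set V) : Set V := OrderHom.lfp (attrF G p T)

/-- The monotone operator whose greatest fixpoint is the position set of the
maximal subgame of `G` avoiding `X` (every kept position keeps a successor). -/
def keepF (G : PGame V) (X : Set V) : Set V →o Set V :=
  ⟨fun S => {v | v ∈ G.Ps ∧ v ∉ X ∧ ∃ u ∈ S, G.Mv v u}, by
    intro A B hAB v hv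
    exact ⟨hv.1, hv.2.1, hv.2.2.imp fun u hu => ⟨hAB hu.1, hu.2⟩⟩⟩

/-- The position set of the maximal subgame of `G` avoiding `X`. -/
def kept (G : PGame V) (X : Set V) : Set V := OrderHom.gfp (keepF G X)

/-- `G ∖ X`: the maximal subgame of `G` whose positions are contained in
`G.Ps \ X`; the move relation and ownership are restricted accordingly. -/
def rem (G : PGame V) (X : Set V) : PGame V where
  Ps0 := G.Ps0 ∩ G.kept X
  Ps1 := G.Ps1 ∩ G.kept X
  Mv := fun v u => G.Mv v u ∧ v ∈ G.kept X ∧ u ∈ G.kept X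
  Pr := G.Pr

/-- A play (infinite sequence of positions) is winning for player `p` if the
maximal priority occurring infinitely often along it has parity `p`. -/
def WinningPlay (G : PGame V) (p : ℕ) (π : ℕ → V) : Prop :=
  ∃ c : ℕ, (∀ n : ℕ, ∃ m, n ≤ m ∧ G.Pr (π m) = c) ∧
    (∀ c' : ℕ, (∀ n : ℕ, ∃ m, n ≤ m ∧ G.Pr (π m) = c') → c' ≤ c) ∧
    c % 2 = p % 2

/-- A play is consistent with the positional strategy `σ` of player `p` if at
`p`-positions it follows `σ`, and everywhere else it follows the move relation. -/
def PlayConsistent (G : PGame V) (p : ℕ) (σ : V → V) (π : ℕ → V) : Prop :=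
  ∀ i : ℕ, (π i ∈ G.owner p → π (i + 1) = σ (π i)) ∧
    (π i ∉ G.owner p → G.Mv (π i) (π (i + 1)))

/-- `D` is a `p`-dominion: player `p` has a positional strategy on `D` such
that every consistent play starting in `D` remains in `D` and is winning
for `p`. -/
def IsDominion (G : PGame V) (p : ℕ) (D : Set V) : Prop :=
  D ⊆ G.Ps ∧
    ∃ σ : V → V, (∀ v ∈ D ∩ G.owner p, G.Mv v (σ v) ∧ σ v ∈ D) ∧
      ∀ π : ℕ → V, π 0 ∈ D → PlayConsistent G p σ π →
        (∀ i, π i ∈ D) ∧ WinningPlay G p π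

/-- The winning region of player `p`: the maximal `p`-dominion, i.e. the union
of all `p`-dominions. -/
def winRegion (G : PGame V) (p : ℕ) : Set V := ⋃₀ {D | IsDominion G p D}

/-- Equality of games as games (position sets and moves coincide, and the
priority functions agree on the positions). -/
def GameEq (H K : PGame V) : Prop :=
  H.Ps0 = K.Ps0 ∧ H.Ps1 = K.Ps1 ∧ (∀ v u, H.Mv v u ↔ K.Mv v u) ∧
    ∀ v ∈ H.Ps, H.Pr v = K.Pr v

/-- `H` is a subgame of `G`: its positions form a subset of those of `G` and
its move relation, ownership assignment and priority function are the
restrictions of those of `G`. -/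
def IsSubgameOf (H G : PGame V) : Prop :=
  H.Ps ⊆ G.Ps ∧ H.Ps0 = G.Ps0 ∩ H.Ps ∧ H.Ps1 = G.Ps1 ∩ H.Ps ∧
    (∀ v u, H.Mv v u ↔ (G.Mv v u ∧ v ∈ H.Ps ∧ u ∈ H.Ps)) ∧
    ∀ v ∈ H.Ps, H.Pr v = G.Pr v

/-- The maximal priority occurring in `G`. -/
noncomputable def maxPr (G : PGame V) : ℕ := sSup (G.Pr '' G.Ps)

/-- The underlying directed graph of the game is strongly connected. -/
def StronglyConnected (G : PGame V) : Prop :=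
  ∀ u ∈ G.Ps, ∀ v ∈ G.Ps, Relation.ReflTransGen G.Mv u v

end PGame

open PGame

/-- The left-subgame function of the Recursive algorithm: remove the
`p`-attractor of the positions of maximal priority `m`, where `p = m mod 2`;
it returns the subgame together with the player `p`. -/
noncomputable def fL {V : Type u} (G : PGame V) : PGame V × ℕ :=
  (G.rem (G.attr (G.maxPr % 2) {v | v ∈ G.Ps ∧ G.Pr v = G.maxPr}), G.maxPr % 2)

/-- The right-subgame function of the Recursive algorithm: remove the
`q`-attractor of the set `W`. -/
def fR {V : Type u} (G : PGame V) (W : Set V) (q : ℕ) : PGame V := G.rem (G.attr q W)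

/-- `RecCall G H` holds iff `H` is the input of some (nested) recursive call
performed by the Recursive (McNaughton-Zielonka) algorithm run on `G`. -/
inductive RecCall {V : Type u} : PGame V → PGame V → Prop
  | left (G : PGame V) (h : G.Ps.Nonempty) : RecCall G (fL G).1
  | right (G : PGame V) (h : G.Ps.Nonempty)
      (hne : ¬ G.pre (G.maxPr % 2 + 1) ((fL G).1.winRegion (G.maxPr % 2 + 1)) ⊆
          (fL G).1.winRegion (G.maxPr % 2 + 1)) :
      RecCall G (fR G ((fL G).1.winRegion (G.maxPr % 2 + 1)) (G.maxPr % 2 + 1))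
  | trans {G H K : PGame V} : RecCall G H → RecCall H K → RecCall G K

/-- The positions of the core games: `α i`, `β i` and `γ i`. -/
inductive CorePos : Type
  | alpha : ℕ → CorePos
  | beta : ℕ → CorePos
  | gamma : ℕ → CorePos
  deriving DecidableEq

section Core

variable {X : Type}

/-- The position `α i` inside an ambient type extending the core positions. -/
def aP (i : ℕ) : CorePos ⊕ X := Sum.inl (CorePos.alpha i)

/-- The position `β i` inside an ambient type extending the core positions. -/
def bP (i : ℕ) : CorePos ⊕ X := Sum.inl (CorePos.beta i)

/-- The position `γ i` inside an ambient type extending the core positions. -/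
def cP (i : ℕ) : CorePos ⊕ X := Sum.inl (CorePos.gamma i)

/-- Player 0 positions of the core game `G_C^k`. -/
def corePs0 (k : ℕ) : Set (CorePos ⊕ X) :=
  {v | ∃ i, i ≤ 2 * k ∧
    ((i % 2 = 0 ∧ (v = aP i ∨ v = bP i)) ∨ (i % 2 = 1 ∧ v = cP i))}

/-- Player 1 positions of the core game `G_C^k`. -/
def corePs1 (k : ℕ) : Set (CorePos ⊕ X) :=
  {v | ∃ i, i ≤ 2 * k ∧
    ((i % 2 = 1 ∧ (v = aP i ∨ v = bP i)) ∨ (i % 2 = 0 ∧ v = cP i))}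

/-- The move relation of the core game `G_C^k`. -/
def coreMv (k : ℕ) : (CorePos ⊕ X) → (CorePos ⊕ X) → Prop := fun v u =>
  ∃ i, i ≤ 2 * k ∧
    ((v = aP i ∧ u = bP i) ∨
     (v = bP i ∧ u = cP i) ∨
     (v = bP i ∧ 0 < i ∧ u = aP (i - 1)) ∨
     (v = cP i ∧ u = cP i) ∨
     (v = cP i ∧ u = bP i) ∨
     (v = cP i ∧ i < 2 * k ∧ u = aP (i + 1)))

/-- The priority function of the core game `G_C^k`. -/
def corePr (k : ℕ) : (CorePos ⊕ X) → ℕ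
  | Sum.inl (CorePos.alpha i) => 2 * k + i + 1
  | Sum.inl (CorePos.beta i) => i
  | Sum.inl (CorePos.gamma i) => i
  | Sum.inr _ => 0

/-- The core game `G_C^k` (inside an arbitrary ambient position type). -/
def coreGame (k : ℕ) : PGame (CorePos ⊕ X) :=
  { Ps0 := corePs0 k, Ps1 := corePs1 k, Mv := coreMv k, Pr := corePr k }

/-- `G` is a core extension of `G_C^k`. -/
def IsCoreExtension (k : ℕ) (G : PGame (CorePos ⊕ X)) : Prop :=
  GameEq (G.rem {v | v ∈ G.Ps ∧ v ∉ (coreGame k (X := X)).Ps}) (coreGame k) ∧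
  (∀ v ∈ G.Ps, v ∉ (coreGame k (X := X)).Ps → G.Pr v < G.Pr (aP 0)) ∧
  (∀ i, i ≤ 2 * k → ∀ v ∈ G.Ps, v ∉ (coreGame k (X := X)).Ps →
      ¬ G.Mv (aP i) v ∧ ¬ G.Mv v (aP i) ∧ ¬ G.Mv (bP i) v ∧ ¬ G.Mv v (bP i)) ∧
  (∀ i, i ≤ 2 * k → ∀ v ∈ G.Ps, v ∉ (coreGame k (X := X)).Ps →
      G.Mv (cP i) v → v ∈ G.owner i ∧ G.Mv v (cP i) ∧ G.Pr v ≤ i)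

/-- A worst-case family: every member (with index `k ≥ 1`) is a parity game
which is a core extension of `G_C^k`. -/
def WorstCaseFamily (Gf : ℕ → PGame (CorePos ⊕ X)) : Prop :=
  ∀ k, 1 ≤ k → (Gf k).IsParityGame ∧ IsCoreExtension k (Gf k)

/-- Auxiliary definition of the subgames `G_w` of the induced subgame tree;
the sequence (`false` = L, `true` = R) is processed in reverse. -/
def subGAux (G0 : PGame (CorePos ⊕ X)) (k : ℕ) : List Bool → PGame (CorePos ⊕ X)
  | [] => G0
  | x :: r =>
    let Gw := subGAux G0 k r
    let hat :=
      if x then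
        Gw.rem (Gw.attr 0 ((Gw.rem (Gw.attr 1 {aP (2 * (k - r.length))})).winRegion 0))
      else
        Gw.rem (Gw.attr 1 {aP (2 * (k - r.length))})
    hat.rem (hat.attr 0 {aP (2 * (k - (r.length + 1)) + 1)})

/-- Auxiliary definition of the subgames `Ĝ_w` of the induced subgame tree;
the sequence is processed in reverse. -/
def hatAux (G0 : PGame (CorePos ⊕ X)) (k : ℕ) : List Bool → PGame (CorePos ⊕ X)
  | [] => G0
  | x :: r =>
    let Gw := subGAux G0 k r
    if x then
      Gw.rem (Gw.attr 0 ((Gw.rem (Gw.attr 1 {aP (2 * (k - r.length))})).winRegion 0))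
    else
      Gw.rem (Gw.attr 1 {aP (2 * (k - r.length))})

/-- The subgame `G_w^k` of the induced subgame tree of the family member `G0 = G^k`. -/
def treeG (G0 : PGame (CorePos ⊕ X)) (k : ℕ) (w : List Bool) : PGame (CorePos ⊕ X) :=
  subGAux G0 k w.reverse

/-- The subgame `Ĝ_w^k` of the induced subgame tree of the family member `G0 = G^k`. -/
def treeHatG (G0 : PGame (CorePos ⊕ X)) (k : ℕ) (w : List Bool) : PGame (CorePos ⊕ X) :=
  hatAux G0 k w.reverse

/-- Membership in the induced subgame tree `T_k`. -/
def InTree (G0 : PGame (CorePos ⊕ X)) (k : ℕ) (H : PGame (CorePos ⊕ X)) : Prop :=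
  (∃ w : List Bool, w.length ≤ k ∧ H = treeG G0 k w) ∨
    (∃ w : List Bool, w ≠ [] ∧ w.length ≤ k + 1 ∧ H = treeHatG G0 k w)

end Core

/-- The additional positions `δ_I^p` of the SCC family: an unordered pair of
indices together with a player (`false` = player 0, `true` = player 1). -/
abbrev DeltaPos : Type := Sym2 ℕ × Bool

/-- The ambient position type of the SCC family. -/
abbrev SPos : Type := CorePos ⊕ DeltaPos

/-- The parity associated with a boolean player. -/
def bval (b : Bool) : ℕ := if b then 1 else 0

/-- The positions `δ_I^p` actually present in `G_S^k`. -/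
def validDelta (k : ℕ) (d : DeltaPos) : Prop :=
  ∃ i j : ℕ, d.1 = s(i, j) ∧ i ≠ j ∧ i ≤ 2 * k ∧ j ≤ 2 * k ∧
    (i % 2 = j % 2 → bval d.2 = i % 2)

/-- The move relation of the SCC-family game `G_S^k`. -/
def sccMv (k : ℕ) : SPos → SPos → Prop := fun v u =>
  coreMv k v u ∨
  (∃ i, i ≤ 2 * k ∧ ∃ d : DeltaPos, validDelta k d ∧ i ∈ d.1 ∧ i % 2 = bval d.2 ∧
      ((v = cP i ∧ u = Sum.inr d) ∨ (v = Sum.inr d ∧ u = cP i))) ∨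
  (∃ d : DeltaPos, validDelta k d ∧ validDelta k (d.1, !d.2) ∧
      (∃ i j : ℕ, d.1 = s(i, j) ∧ i % 2 ≠ j % 2) ∧
      v = Sum.inr d ∧ u = Sum.inr (d.1, !d.2))

/-- The SCC-family game `G_S^k`. -/
def sccGame (k : ℕ) : PGame SPos :=
  { Ps0 := corePs0 k ∪ {v | ∃ d : DeltaPos, validDelta k d ∧ d.2 = false ∧ v = Sum.inr d},
    Ps1 := corePs1 k ∪ {v | ∃ d : DeltaPos, validDelta k d ∧ d.2 = true ∧ v = Sum.inr d},
    Mv := sccMv k,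
    Pr := corePr k }

/-!
Removing the `δ`-positions from `G_S^k` leaves exactly `G_C^k`: the core game is a left-total
subgame of `G_S^k`, so the maximal subgame avoiding the `δ`-positions loses nothing else. The other
conditions are local: every `δ`-position has priority `0` and is adjacent only to `γ`-positions of
the matching parity, with moves in both directions, and every position of `G_S^k` has a successor.
-/

namespace PGame

variable {V : Type u}

lemma kept_subset (G : PGame V) (X : Set V) : G.kept X ⊆ G.Ps \ X := by
  intro v hv
  rw [kept, ← OrderHom.map_gfp] at hv
  exact ⟨hv.1, hv.2.1⟩

lemma subset_kept {G : PGame V} {X S : Set V} (hS : S ⊆ G.Ps \ X)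
    (hsucc : ∀ v ∈ S, ∃ u ∈ S, G.Mv v u) : S ⊆ G.kept X :=
  OrderHom.le_gfp _ fun v hv => ⟨(hS hv).1, (hS hv).2, hsucc v hv⟩

theorem gameEq_rem_of_isSubgameOf {C G : PGame V} (hC : C.IsSubgameOf G)
    (htot : ∀ v ∈ C.Ps, ∃ u, C.Mv v u) :
    GameEq (G.rem {v | v ∈ G.Ps ∧ v ∉ C.Ps}) C := by
  obtain ⟨hPs, hPs0, hPs1, hMv, hPr⟩ := hC
  have hkept : G.kept {v | v ∈ G.Ps ∧ v ∉ C.Ps} = C.Ps := by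
    refine Set.Subset.antisymm (fun v hv => ?_) (subset_kept (fun v hv => ?_) fun v hv => ?_)
    · obtain ⟨hvG, hvX⟩ := kept_subset _ _ hv
      by_contra hvC
      exact hvX ⟨hvG, hvC⟩
    · exact ⟨hPs hv, fun h => h.2 hv⟩
    · obtain ⟨u, hu⟩ := htot v hv
      exact ⟨u, ((hMv v u).1 hu).2.2, ((hMv v u).1 hu).1⟩
  refine ⟨?_, ?_, fun v u => ?_, fun v hv => ?_⟩
  · simp only [rem, hkept]
    exact hPs0.symm
  · simp only [rem, hkept]
    exact hPs1.symm
  · simp only [rem, hkept]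
    exact (hMv v u).symm
  · have hvC : v ∈ C.Ps := by rcases hv with hv | hv <;> exact hkept ▸ hv.2
    exact (hPr v hvC).symm

end PGame

open PGame

section Core

variable {X : Type} {k : ℕ}

lemma mem_coreGame_Ps {v : CorePos ⊕ X} :
    v ∈ (coreGame k).Ps ↔ ∃ i ≤ 2 * k, v = aP i ∨ v = bP i ∨ v = cP i := by
  constructor
  · rintro (⟨i, hi, ⟨-, h | h⟩ | ⟨-, h⟩⟩ | ⟨i, hi, ⟨-, h | h⟩ | ⟨-, h⟩⟩) <;>
      exact ⟨i, hi, by tauto⟩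
  · rintro ⟨i, hi, h⟩
    rcases Nat.mod_two_eq_zero_or_one i with hp | hp <;> rcases h with h | h | h
    · exact Or.inl ⟨i, hi, Or.inl ⟨hp, Or.inl h⟩⟩
    · exact Or.inl ⟨i, hi, Or.inl ⟨hp, Or.inr h⟩⟩
    · exact Or.inr ⟨i, hi, Or.inr ⟨hp, h⟩⟩
    · exact Or.inr ⟨i, hi, Or.inl ⟨hp, Or.inl h⟩⟩
    · exact Or.inr ⟨i, hi, Or.inl ⟨hp, Or.inr h⟩⟩
    · exact Or.inl ⟨i, hi, Or.inr ⟨hp, h⟩⟩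

lemma inr_notMem_coreGame_Ps (x : X) : Sum.inr x ∉ (coreGame k).Ps := by
  simp [mem_coreGame_Ps, aP, bP, cP]

lemma coreMv_mem {v u : CorePos ⊕ X} (h : coreMv k v u) :
    v ∈ (coreGame k).Ps ∧ u ∈ (coreGame k).Ps := by
  obtain ⟨i, hi, h⟩ := h
  simp only [mem_coreGame_Ps]
  rcases h with ⟨rfl, rfl⟩ | ⟨rfl, rfl⟩ | ⟨rfl, -, rfl⟩ | ⟨rfl, rfl⟩ | ⟨rfl, rfl⟩ | ⟨rfl, hlt, rfl⟩
  · exact ⟨⟨i, hi, by tauto⟩, ⟨i, hi, by tauto⟩⟩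
  · exact ⟨⟨i, hi, by tauto⟩, ⟨i, hi, by tauto⟩⟩
  · exact ⟨⟨i, hi, by tauto⟩, ⟨i - 1, by omega, by tauto⟩⟩
  · exact ⟨⟨i, hi, by tauto⟩, ⟨i, hi, by tauto⟩⟩
  · exact ⟨⟨i, hi, by tauto⟩, ⟨i, hi, by tauto⟩⟩
  · exact ⟨⟨i, hi, by tauto⟩, ⟨i + 1, hlt, by tauto⟩⟩

theorem coreGame_isParityGame (k : ℕ) : (coreGame k (X := X)).IsParityGame := by
  refine ⟨?_, ?_, ?_, fun v u h => coreMv_mem h⟩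
  · rw [Set.disjoint_left]
    rintro v ⟨i, -, ⟨hi, h | h⟩ | ⟨hi, h⟩⟩ ⟨j, -, ⟨hj, h' | h'⟩ | ⟨hj, h'⟩⟩ <;>
      subst h <;> simp only [aP, bP, cP, Sum.inl.injEq, reduceCtorEq, CorePos.alpha.injEq,
        CorePos.beta.injEq, CorePos.gamma.injEq] at h' <;> omega
  · refine (Set.finite_Iic (2 * k)).biUnion (fun i _ => Set.toFinite {aP i, bP i, cP i})
      |>.subset fun v hv => ?_
    obtain ⟨i, hi, h⟩ := mem_coreGame_Ps.1 hv
    exact Set.mem_biUnion (Set.mem_Iic.2 hi) (by simpa using h)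
  · intro v hv
    obtain ⟨i, hi, rfl | rfl | rfl⟩ := mem_coreGame_Ps.1 hv
    · exact ⟨bP i, mem_coreGame_Ps.2 ⟨i, hi, by tauto⟩, i, hi, by tauto⟩
    · exact ⟨cP i, mem_coreGame_Ps.2 ⟨i, hi, by tauto⟩, i, hi, by tauto⟩
    · exact ⟨cP i, mem_coreGame_Ps.2 ⟨i, hi, by tauto⟩, i, hi, by tauto⟩

end Core

section SCC

variable {k : ℕ}

lemma validDelta.exists_mem_parity {d : DeltaPos} (hd : validDelta k d) :
    ∃ i ≤ 2 * k, i ∈ d.1 ∧ i % 2 = bval d.2 := by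
  obtain ⟨i, j, hij, -, hi, hj, hpar⟩ := hd
  have hb : bval d.2 < 2 := by cases d.2 <;> simp [bval]
  by_cases hpi : i % 2 = bval d.2
  · exact ⟨i, hi, hij ▸ Sym2.mem_mk_left i j, hpi⟩
  · exact ⟨j, hj, hij ▸ Sym2.mem_mk_right i j, by omega⟩

lemma finite_setOf_validDelta (k : ℕ) : {d | validDelta k d}.Finite := by
  refine (((Set.finite_Iic (2 * k)).prod (Set.finite_Iic (2 * k))).prod
    (Set.finite_univ (α := Bool))).image
    (fun x : (ℕ × ℕ) × Bool => (s(x.1.1, x.1.2), x.2)) |>.subset ?_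
  rintro ⟨q, b⟩ ⟨i, j, rfl, -, hi, hj, -⟩
  exact ⟨((i, j), b), ⟨⟨hi, hj⟩, trivial⟩, rfl⟩

lemma sccGame_Ps (k : ℕ) :
    (sccGame k).Ps = (coreGame k).Ps ∪ Sum.inr '' {d | validDelta k d} := by
  ext v
  constructor
  · rintro ((h | ⟨d, hd, -, rfl⟩) | (h | ⟨d, hd, -, rfl⟩))
    exacts [Or.inl (Or.inl h), Or.inr ⟨d, hd, rfl⟩, Or.inl (Or.inr h), Or.inr ⟨d, hd, rfl⟩]
  · rintro ((h | h) | ⟨d, hd, rfl⟩)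
    · exact Or.inl (Or.inl h)
    · exact Or.inr (Or.inl h)
    · cases hb : d.2
      exacts [Or.inl (Or.inr ⟨d, hd, hb, rfl⟩), Or.inr (Or.inr ⟨d, hd, hb, rfl⟩)]

lemma inr_mem_sccGame_owner {d : DeltaPos} {i : ℕ} (hd : validDelta k d)
    (hp : i % 2 = bval d.2) : (Sum.inr d : SPos) ∈ (sccGame k).owner i := by
  unfold owner
  cases hb : d.2 <;> simp only [hb, bval, Bool.false_eq_true, if_false, if_true] at hp
  · rw [if_pos hp]
    exact Or.inr ⟨d, hd, hb, rfl⟩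
  · rw [if_neg (by omega)]
    exact Or.inr ⟨d, hd, hb, rfl⟩

lemma sccMv_inl_inr_iff {c : CorePos} {d : DeltaPos} :
    sccMv k (Sum.inl c) (Sum.inr d) ↔
      ∃ i ≤ 2 * k, c = CorePos.gamma i ∧ validDelta k d ∧ i ∈ d.1 ∧ i % 2 = bval d.2 := by
  constructor
  · rintro (h | ⟨i, hi, d', hd', hmem, hpar, ⟨h1, h2⟩ | ⟨h1, -⟩⟩ | ⟨d', -, -, -, h1, -⟩)
    · exact absurd (coreMv_mem h).2 (inr_notMem_coreGame_Ps d)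
    · obtain rfl : d' = d := Sum.inr_injective h2.symm
      exact ⟨i, hi, Sum.inl_injective h1, hd', hmem, hpar⟩
    · exact absurd h1 Sum.inl_ne_inr
    · exact absurd h1 Sum.inl_ne_inr
  · rintro ⟨i, hi, rfl, hd, hmem, hpar⟩
    exact Or.inr (Or.inl ⟨i, hi, d, hd, hmem, hpar, Or.inl ⟨rfl, rfl⟩⟩)

lemma sccMv_inr_inl_iff {c : CorePos} {d : DeltaPos} :
    sccMv k (Sum.inr d) (Sum.inl c) ↔ sccMv k (Sum.inl c) (Sum.inr d) := by
  rw [sccMv_inl_inr_iff]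
  constructor
  · rintro (h | ⟨i, hi, d', hd', hmem, hpar, ⟨h1, -⟩ | ⟨h1, h2⟩⟩ | ⟨d', -, -, -, -, h2⟩)
    · exact absurd (coreMv_mem h).1 (inr_notMem_coreGame_Ps d)
    · exact absurd h1.symm Sum.inl_ne_inr
    · obtain rfl : d' = d := Sum.inr_injective h1.symm
      exact ⟨i, hi, Sum.inl_injective h2, hd', hmem, hpar⟩
    · exact absurd h2 Sum.inl_ne_inr
  · rintro ⟨i, hi, rfl, hd, hmem, hpar⟩
    exact Or.inr (Or.inl ⟨i, hi, d, hd, hmem, hpar, Or.inr ⟨rfl, rfl⟩⟩)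

lemma coreGame_isSubgameOf_sccGame (k : ℕ) : (coreGame k).IsSubgameOf (sccGame k) := by
  have hcore : ∀ v, v ∈ (coreGame k).Ps → v ∈ (sccGame k).Ps := by
    rw [sccGame_Ps]; exact fun v => Or.inl
  have hdelta : ∀ d : DeltaPos, Sum.inr d ∉ (coreGame k).Ps := inr_notMem_coreGame_Ps
  refine ⟨hcore, ?_, ?_, fun v u => ⟨fun h => ⟨Or.inl h, coreMv_mem h⟩, ?_⟩, fun v _ => rfl⟩
  · ext v
    refine ⟨fun h => ⟨Or.inl h, Or.inl h⟩, ?_⟩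
    rintro ⟨h | ⟨d, -, -, rfl⟩, hv⟩
    exacts [h, absurd hv (hdelta d)]
  · ext v
    refine ⟨fun h => ⟨Or.inl h, Or.inr h⟩, ?_⟩
    rintro ⟨h | ⟨d, -, -, rfl⟩, hv⟩
    exacts [h, absurd hv (hdelta d)]
  · rintro ⟨h | ⟨-, -, d, -, -, -, ⟨-, rfl⟩ | ⟨rfl, -⟩⟩ | ⟨d, -, -, -, rfl, -⟩, hv, hu⟩
    exacts [h, absurd hu (hdelta d), absurd hv (hdelta d), absurd hv (hdelta d)]

theorem sccGame_isCoreExtension (k : ℕ) : IsCoreExtension k (sccGame k) := by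
  have hextra : ∀ v ∈ (sccGame k).Ps, v ∉ (coreGame k).Ps → ∃ d, validDelta k d ∧ v = Sum.inr d := by
    rw [sccGame_Ps]
    rintro v (h | ⟨d, hd, rfl⟩) hv
    exacts [absurd h hv, ⟨d, hd, rfl⟩]
  refine ⟨gameEq_rem_of_isSubgameOf (coreGame_isSubgameOf_sccGame k) fun v hv => ?_,
    fun v hv hvc => ?_, fun i _ v hv hvc => ?_, fun i _ v hv hvc hmv => ?_⟩
  · obtain ⟨u, -, h⟩ := (coreGame_isParityGame k).2.2.1 v hv
    exact ⟨u, h⟩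
  · obtain ⟨d, -, rfl⟩ := hextra v hv hvc
    show 0 < 2 * k + 0 + 1
    omega
  · obtain ⟨d, -, rfl⟩ := hextra v hv hvc
    simp [sccGame, aP, bP, sccMv_inr_inl_iff, sccMv_inl_inr_iff]
  · obtain ⟨d, -, rfl⟩ := hextra v hv hvc
    obtain ⟨j, -, hij, hd, -, hpar⟩ := sccMv_inl_inr_iff.1 hmv
    obtain rfl : i = j := CorePos.gamma.inj hij
    exact ⟨inr_mem_sccGame_owner hd hpar, sccMv_inr_inl_iff.2 hmv, Nat.zero_le i⟩

theorem sccGame_isParityGame (k : ℕ) : (sccGame k).IsParityGame := by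
  obtain ⟨hdisj, hfin, htot, -⟩ := coreGame_isParityGame (X := DeltaPos) k
  have hsub := coreGame_isSubgameOf_sccGame k
  refine ⟨?_, ?_, ?_, ?_⟩
  · rw [Set.disjoint_left]
    rintro v (h0 | ⟨d, -, hb, rfl⟩) (h1 | ⟨d', -, hb', he⟩)
    · exact Set.disjoint_left.1 hdisj h0 h1
    · exact inr_notMem_coreGame_Ps d' (he ▸ Or.inl h0)
    · exact inr_notMem_coreGame_Ps d (Or.inr h1)
    · obtain rfl := Sum.inr_injective he
      exact absurd (hb.symm.trans hb') Bool.false_ne_true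
  · rw [sccGame_Ps]
    exact hfin.union ((finite_setOf_validDelta k).image _)
  · intro v hv
    rw [sccGame_Ps] at hv
    rcases hv with hv | ⟨d, hd, rfl⟩
    · obtain ⟨u, hu, h⟩ := htot v hv
      exact ⟨u, hsub.1 hu, Or.inl h⟩
    · obtain ⟨i, hi, hmem, hpar⟩ := hd.exists_mem_parity
      refine ⟨cP i, hsub.1 (mem_coreGame_Ps.2 ⟨i, hi, by tauto⟩), ?_⟩
      exact sccMv_inr_inl_iff.2 (sccMv_inl_inr_iff.2 ⟨i, hi, rfl, hd, hmem, hpar⟩)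
  · have hdelta : ∀ d, validDelta k d → (Sum.inr d : SPos) ∈ (sccGame k).Ps := fun d hd => by
      rw [sccGame_Ps]; exact Or.inr ⟨d, hd, rfl⟩
    rintro v u (h | ⟨i, hi, d, hd, -, -, ⟨rfl, rfl⟩ | ⟨rfl, rfl⟩⟩ | ⟨d, hd, hd', -, rfl, rfl⟩)
    · exact ⟨hsub.1 (coreMv_mem h).1, hsub.1 (coreMv_mem h).2⟩
    · exact ⟨hsub.1 (mem_coreGame_Ps.2 ⟨i, hi, by tauto⟩), hdelta d hd⟩
    · exact ⟨hdelta d hd, hsub.1 (mem_coreGame_Ps.2 ⟨i, hi, by tauto⟩)⟩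
    · exact ⟨hdelta d hd, hdelta _ hd'⟩

end SCC

/-- For every `k ≥ 1`, the game `G_S^k` of the SCC family is a core extension
of the core game `G_C^k`; hence the SCC family is a worst-case family. -/
theorem stmt12 :
    (∀ k, 1 ≤ k → IsCoreExtension k (sccGame k)) ∧
    WorstCaseFamily (fun k => sccGame k) :=
  ⟨fun k _ => sccGame_isCoreExtension k,
    fun k _ => ⟨sccGame_isParityGame k, sccGame_isCoreExtension k⟩⟩
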